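/- Let k ≥ 1, w ∈ (0,∞), and let B, B̃ ∈ ℝ^{k×k} with B̃ invertible and B̃ᵀ·B̃ = Bᵀ·B + w²·I_k. Let d ∈ ℝ^k and let d̃ ∈ ℝ^k be the unique vector with B̃ᵀ·d̃ = Bᵀ·d. Then w²·‖d‖²/(σ_max(B)² + w²) ≤ ‖d‖² − ‖d̃‖² ≤ w²·‖d‖²/(σ_min(B)² + w²). -/

import Mathlib

open Matrix

/-- The singular values of a real matrix `A`: the square roots of the eigenvalues of
`Aᵀ·A` (indexed by the column type). -/
noncomputable def singVals {ι κ : Type*} [Fintype ι] [Fintype κ] [DecidableEq κ]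
    (A : Matrix ι κ ℝ) : κ → ℝ :=
  fun j => Real.sqrt (((by simpa [Matrix.conjTranspose_eq_transpose_of_trivial] using
    Matrix.isHermitian_conjTranspose_mul_self A : (Aᵀ * A).IsHermitian)).eigenvalues j)

/-- The largest singular value (spectral norm). -/
noncomputable def sigmaMax {ι κ : Type*} [Fintype ι] [Fintype κ] [DecidableEq κ]
    (A : Matrix ι κ ℝ) : ℝ := ⨆ j, singVals A j

/-- The smallest singular value. -/
noncomputable def sigmaMin {ι κ : Type*} [Fintype ι] [Fintype κ] [DecidableEq κ]
    (A : Matrix ι κ ℝ) : ℝ := ⨅ j, singVals A j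

section Helpers

variable {k : ℕ}

lemma spectral_real {A : Matrix (Fin k) (Fin k) ℝ} (hA : A.IsHermitian) :
    A = (hA.eigenvectorUnitary : Matrix (Fin k) (Fin k) ℝ) * diagonal hA.eigenvalues *
      star (hA.eigenvectorUnitary : Matrix (Fin k) (Fin k) ℝ) := by
  have := hA.spectral_theorem
  simpa [RCLike.ofReal_real_eq_id] using this

lemma unitary_conj_smul_one {U : Matrix (Fin k) (Fin k) ℝ} (hU : U * star U = 1) (t : ℝ) :
    U * (t • (1 : Matrix (Fin k) (Fin k) ℝ)) * star U = t • 1 := by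
  rw [mul_smul_comm, mul_one, smul_mul_assoc, hU]

lemma det_sub_smul_eq_prod {A : Matrix (Fin k) (Fin k) ℝ} (hA : A.IsHermitian) (t : ℝ) :
    (A - t • 1).det = ∏ i, (hA.eigenvalues i - t) := by
  set U : Matrix (Fin k) (Fin k) ℝ := (hA.eigenvectorUnitary : Matrix (Fin k) (Fin k) ℝ) with hUdef
  have hUU : U * star U = 1 := (Matrix.mem_unitaryGroup_iff).mp hA.eigenvectorUnitary.2
  have h1 : A - t • 1 = U * diagonal (fun i => hA.eigenvalues i - t) * star U := by
    have : diagonal (fun i => hA.eigenvalues i - t)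
        = diagonal hA.eigenvalues - t • (1 : Matrix (Fin k) (Fin k) ℝ) := by
      rw [smul_one_eq_diagonal, ← diagonal_sub]
    rw [this, mul_sub, sub_mul, ← spectral_real hA, unitary_conj_smul_one hUU]
  have hUU' : star U * U = 1 := by
    exact Unitary.coe_star_mul_self hA.eigenvectorUnitary
  rw [h1, det_mul, det_mul, mul_comm, ← mul_assoc, ← det_mul, hUU', det_one, one_mul,
    det_diagonal]

lemma transpose_mulVec_dot (A : Matrix (Fin k) (Fin k) ℝ) (v z : Fin k → ℝ) :
    (Aᵀ *ᵥ v) ⬝ᵥ z = v ⬝ᵥ (A *ᵥ z) := by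
  rw [mulVec_transpose, ← dotProduct_mulVec]

lemma dot_mulVec_self (X : Matrix (Fin k) (Fin k) ℝ) (y : Fin k → ℝ) :
    (X *ᵥ y) ⬝ᵥ (X *ᵥ y) = y ⬝ᵥ ((Xᵀ * X) *ᵥ y) := by
  rw [dotProduct_mulVec, ← mulVec_mulVec, mulVec_transpose, dotProduct_comm]

lemma dot_self_eq_sum_sq (v : Fin k → ℝ) : v ⬝ᵥ v = ∑ i, v i ^ 2 := by
  simp [dotProduct, pow_two]

end Helpers

/-- If `B̃ᵀ·B̃ = Bᵀ·B + w²·I_k` with `B̃` invertible and `B̃ᵀ·d̃ = Bᵀ·d`,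
then `w²·‖d‖²/(σ_max(B)² + w²) ≤ ‖d‖² − ‖d̃‖² ≤ w²·‖d‖²/(σ_min(B)² + w²)`. -/
theorem norm_sq_diff_bounds
    (k : ℕ) (hk : 1 ≤ k) (w : ℝ) (hw : 0 < w)
    (B Bt : Matrix (Fin k) (Fin k) ℝ)
    (hBt : IsUnit Bt.det)
    (hgram : Btᵀ * Bt = Bᵀ * B + (w ^ 2) • (1 : Matrix (Fin k) (Fin k) ℝ))
    (d dt : Fin k → ℝ)
    (hd : Btᵀ *ᵥ dt = Bᵀ *ᵥ d) :
    w ^ 2 * (∑ i, d i ^ 2) / (sigmaMax B ^ 2 + w ^ 2)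
        ≤ (∑ i, d i ^ 2) - (∑ i, dt i ^ 2) ∧
    (∑ i, d i ^ 2) - (∑ i, dt i ^ 2)
        ≤ w ^ 2 * (∑ i, d i ^ 2) / (sigmaMin B ^ 2 + w ^ 2) := by
  haveI : Nonempty (Fin k) := ⟨⟨0, hk⟩⟩
  have hw2 : (0:ℝ) < w ^ 2 := by positivity
  have hCT : Bᴴ = Bᵀ := conjTranspose_eq_transpose_of_trivial B
  have hM : (Bᴴ * B).IsHermitian := isHermitian_conjTranspose_mul_self B
  have hN : (B * Bᴴ).IsHermitian := isHermitian_mul_conjTranspose_self B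
  set M : Matrix (Fin k) (Fin k) ℝ := Bᴴ * B with hMdef
  set N : Matrix (Fin k) (Fin k) ℝ := B * Bᴴ with hNdef
  set μ : Fin k → ℝ := hM.eigenvalues with hμdef
  set ν : Fin k → ℝ := hN.eigenvalues with hνdef
  have hμ0 : ∀ i, 0 ≤ μ i := fun i => (posSemidef_conjTranspose_mul_self B).eigenvalues_nonneg i
  have hν0 : ∀ i, 0 ≤ ν i := fun i => (posSemidef_self_mul_conjTranspose B).eigenvalues_nonneg i
  have hsv : ∀ j, singVals B j = Real.sqrt (μ j) := fun j => rfl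
  -- sigma bounds
  have hbddA : BddAbove (Set.range (singVals B)) := Set.Finite.bddAbove (Set.finite_range _)
  have hsmin0 : 0 ≤ sigmaMin B := le_ciInf fun i => by rw [hsv]; exact Real.sqrt_nonneg _
  have hμmax : ∀ i, μ i ≤ sigmaMax B ^ 2 := by
    intro i
    have h1 : singVals B i ≤ sigmaMax B := le_ciSup hbddA i
    have h0 : 0 ≤ singVals B i := by rw [hsv]; exact Real.sqrt_nonneg _
    have h2 : singVals B i ^ 2 = μ i := by rw [hsv]; exact Real.sq_sqrt (hμ0 i)
    nlinarith
  have hμmin : ∀ i, sigmaMin B ^ 2 ≤ μ i := by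
    intro i
    have h1 : sigmaMin B ≤ singVals B i :=
      ciInf_le (Set.Finite.bddBelow (Set.finite_range _)) i
    have h2 : singVals B i ^ 2 = μ i := by rw [hsv]; exact Real.sq_sqrt (hμ0 i)
    nlinarith
  -- eigenvalue transfer from N to M
  have htrans : ∀ j, ∃ i, ν j = μ i := by
    intro j
    have hvnz : ⇑(hN.eigenvectorBasis j) ≠ 0 := fun h =>
      hN.eigenvectorBasis.orthonormal.ne_zero j (by simpa using congrArg (WithLp.toLp 2) h)
    have hNv : N *ᵥ ⇑(hN.eigenvectorBasis j) = ν j • ⇑(hN.eigenvectorBasis j) :=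
      hN.mulVec_eigenvectorBasis j
    set v : Fin k → ℝ := ⇑(hN.eigenvectorBasis j) with hvdef
    by_cases hBv : Bᴴ *ᵥ v = 0
    · have hν0' : ν j • v = 0 := by
        rw [← hNv, hNdef, ← mulVec_mulVec, hBv, mulVec_zero]
      have hνj : ν j = 0 := by
        by_contra h
        exact hvnz (by simpa [smul_eq_zero, h] using hν0')
      have hdetB : (Bᴴ).det = 0 := by
        by_contra h
        have hu : IsUnit (Bᴴ).det := isUnit_iff_ne_zero.mpr h
        have : v = 0 := by
          have h2 : (Bᴴ)⁻¹ *ᵥ (Bᴴ *ᵥ v) = (Bᴴ)⁻¹ *ᵥ 0 := congrArg _ hBv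
          rwa [mulVec_mulVec, nonsing_inv_mul _ hu, one_mulVec, mulVec_zero] at h2
        exact hvnz this
      have hdetM : (M - (0:ℝ) • 1).det = 0 := by
        simp only [zero_smul, sub_zero, hMdef, det_mul, hdetB, zero_mul]
      rw [det_sub_smul_eq_prod hM 0] at hdetM
      obtain ⟨i, -, hi⟩ := Finset.prod_eq_zero_iff.mp hdetM
      exact ⟨i, by rw [hνj]; linarith [sub_eq_zero.mp (by linarith [hi] : μ i - 0 = 0)]⟩
    · have hMu : M *ᵥ (Bᴴ *ᵥ v) = ν j • (Bᴴ *ᵥ v) := by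
        calc M *ᵥ (Bᴴ *ᵥ v) = (Bᴴ * (B * Bᴴ)) *ᵥ v := by
              rw [hMdef, mulVec_mulVec, Matrix.mul_assoc]
          _ = Bᴴ *ᵥ (N *ᵥ v) := by rw [← hNdef, ← mulVec_mulVec]
          _ = ν j • (Bᴴ *ᵥ v) := by rw [hNv, mulVec_smul]
      have hdet0 : (M - ν j • 1).det = 0 := by
        by_contra h
        have hu2 : IsUnit (M - ν j • 1).det := isUnit_iff_ne_zero.mpr h
        have hker : (M - ν j • 1) *ᵥ (Bᴴ *ᵥ v) = 0 := by
          rw [sub_mulVec, hMu, smul_mulVec, one_mulVec, sub_self]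
        have : Bᴴ *ᵥ v = 0 := by
          have h2 : (M - ν j • 1)⁻¹ *ᵥ ((M - ν j • 1) *ᵥ (Bᴴ *ᵥ v)) = (M - ν j • 1)⁻¹ *ᵥ 0 :=
            congrArg _ hker
          rwa [mulVec_mulVec, nonsing_inv_mul _ hu2, one_mulVec, mulVec_zero] at h2
        exact hBv this
      rw [det_sub_smul_eq_prod hM (ν j)] at hdet0
      obtain ⟨i, -, hi⟩ := Finset.prod_eq_zero_iff.mp hdet0
      exact ⟨i, (sub_eq_zero.mp hi).symm⟩
  have hνmax : ∀ j, ν j ≤ sigmaMax B ^ 2 := by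
    intro j; obtain ⟨i, hi⟩ := htrans j; rw [hi]; exact hμmax i
  have hνmin : ∀ j, sigmaMin B ^ 2 ≤ ν j := by
    intro j; obtain ⟨i, hi⟩ := htrans j; rw [hi]; exact hμmin i
  -- spectral decomposition of N and the inverse of P := N + w^2 • 1
  set U : Matrix (Fin k) (Fin k) ℝ := (hN.eigenvectorUnitary : Matrix (Fin k) (Fin k) ℝ)
    with hUdef
  have hUU : U * star U = 1 := (Matrix.mem_unitaryGroup_iff).mp hN.eigenvectorUnitary.2
  have hUU' : star U * U = 1 := Unitary.coe_star_mul_self hN.eigenvectorUnitary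
  have hUCT : star U = Uᵀ := by
    rw [star_eq_conjTranspose, conjTranspose_eq_transpose_of_trivial]
  have hνpos : ∀ j, 0 < ν j + w ^ 2 := fun j => by nlinarith [hν0 j]
  have hNspec : N = U * diagonal ν * star U := spectral_real hN
  have hPspec : N + w ^ 2 • 1 = U * diagonal (fun j => ν j + w ^ 2) * star U := by
    have h1 : diagonal (fun j => ν j + w ^ 2)
        = diagonal ν + w ^ 2 • (1 : Matrix (Fin k) (Fin k) ℝ) := by
      rw [smul_one_eq_diagonal, ← diagonal_add]
    rw [h1, mul_add, add_mul, ← hNspec, unitary_conj_smul_one hUU]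
  set Dinv : Matrix (Fin k) (Fin k) ℝ := diagonal (fun j => (ν j + w ^ 2)⁻¹) with hDdef
  have hDD : diagonal (fun j => ν j + w ^ 2) * Dinv = 1 := by
    rw [hDdef, diagonal_mul_diagonal,
      show (fun j => (ν j + w ^ 2) * (ν j + w ^ 2)⁻¹) = fun _ => (1:ℝ) from
        funext fun j => mul_inv_cancel₀ (hνpos j).ne', diagonal_one]
  have hright : (N + w ^ 2 • 1) * (U * Dinv * star U) = 1 := by
    rw [hPspec]
    simp only [Matrix.mul_assoc]
    rw [← Matrix.mul_assoc (star U) U (Dinv * star U), hUU', Matrix.one_mul,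
      ← Matrix.mul_assoc (diagonal fun j => ν j + w ^ 2) Dinv (star U), hDD, Matrix.one_mul, hUU]
  have hPunit : IsUnit (N + w ^ 2 • 1).det := isUnit_det_of_right_inverse hright
  have hPinv : (N + w ^ 2 • 1)⁻¹ = U * Dinv * star U := inv_eq_right_inv hright
  -- Gram matrix of Bt
  have hGeq : Btᵀ * Bt = M + w ^ 2 • 1 := by rw [hgram, hMdef, hCT]
  have hBtTdet : IsUnit (Btᵀ).det := by rw [det_transpose]; exact hBt
  have hGdet : IsUnit (M + w ^ 2 • 1).det := by
    rw [← hGeq, det_mul]; exact hBtTdet.mul hBt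
  have hdt : dt = (Btᵀ)⁻¹ *ᵥ (Bᵀ *ᵥ d) := by
    rw [← hd, mulVec_mulVec, nonsing_inv_mul _ hBtTdet, one_mulVec]
  -- commutation
  have hcomm : (N + w ^ 2 • 1) * B = B * (M + w ^ 2 • 1) := by
    rw [add_mul, mul_add, hNdef, hMdef, Matrix.mul_assoc]
    congr 1
    rw [smul_mul_assoc, Matrix.one_mul, mul_smul_comm, Matrix.mul_one]
  have hswap : B * (M + w ^ 2 • 1)⁻¹ = (N + w ^ 2 • 1)⁻¹ * B := by
    have h1 := congrArg (fun X : Matrix (Fin k) (Fin k) ℝ =>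
      (N + w ^ 2 • 1)⁻¹ * X * (M + w ^ 2 • 1)⁻¹) hcomm
    simp only [← Matrix.mul_assoc] at h1
    rw [nonsing_inv_mul _ hPunit, Matrix.one_mul] at h1
    rw [Matrix.mul_assoc ((N + w ^ 2 • 1)⁻¹ * B), mul_nonsing_inv _ hGdet, Matrix.mul_one] at h1
    exact h1
  have hBG : B * (M + w ^ 2 • 1)⁻¹ * Bᵀ = (N + w ^ 2 • 1)⁻¹ * N := by
    rw [hswap, Matrix.mul_assoc, ← hCT, ← hNdef]
  -- the value of ∑ dt i ^ 2
  have hT : (∑ i, dt i ^ 2) = d ⬝ᵥ (((N + w ^ 2 • 1)⁻¹ * N) *ᵥ d) := by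
    rw [← dot_self_eq_sum_sq, hdt, dot_mulVec_self]
    have e1 : ((Btᵀ)⁻¹)ᵀ * (Btᵀ)⁻¹ = (M + w ^ 2 • 1)⁻¹ := by
      rw [transpose_nonsing_inv, transpose_transpose, ← Matrix.mul_inv_rev, hGeq]
    rw [e1, transpose_mulVec_dot, mulVec_mulVec, mulVec_mulVec, hBG]
  have h1A : (1 : Matrix (Fin k) (Fin k) ℝ) - (N + w ^ 2 • 1)⁻¹ * N
      = w ^ 2 • (N + w ^ 2 • 1)⁻¹ := by
    have h2 : (N + w ^ 2 • 1)⁻¹ * (N + w ^ 2 • 1) - (N + w ^ 2 • 1)⁻¹ * N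
        = w ^ 2 • (N + w ^ 2 • 1)⁻¹ := by
      rw [← mul_sub, add_sub_cancel_left, mul_smul_comm, Matrix.mul_one]
    rw [← h2, nonsing_inv_mul _ hPunit]
  have hdiff : (∑ i, d i ^ 2) - (∑ i, dt i ^ 2)
      = w ^ 2 * (d ⬝ᵥ ((U * Dinv * star U) *ᵥ d)) := by
    rw [hT, ← dot_self_eq_sum_sq d,
      show d ⬝ᵥ d = d ⬝ᵥ ((1 : Matrix (Fin k) (Fin k) ℝ) *ᵥ d) by rw [one_mulVec],
      ← dotProduct_sub, ← sub_mulVec, h1A, hPinv, smul_mulVec, dotProduct_smul,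
      smul_eq_mul]
  set c : Fin k → ℝ := star U *ᵥ d with hcdef
  have hquad : d ⬝ᵥ ((U * Dinv * star U) *ᵥ d) = ∑ j, (ν j + w ^ 2)⁻¹ * c j ^ 2 := by
    rw [← mulVec_mulVec, ← mulVec_mulVec, ← transpose_mulVec_dot, ← hUCT, ← hcdef]
    simp only [hDdef, dotProduct, mulVec_diagonal]
    exact Finset.sum_congr rfl fun x _ => by ring
  have hsum : (∑ i, d i ^ 2) = ∑ j, c j ^ 2 := by
    have h1 : c ⬝ᵥ c = d ⬝ᵥ d := by
      rw [hcdef, hUCT, dot_mulVec_self, transpose_transpose, ← hUCT, hUU, one_mulVec]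
    rw [← dot_self_eq_sum_sq d, ← dot_self_eq_sum_sq c, h1]
  have hsmax2 : 0 < sigmaMax B ^ 2 + w ^ 2 := by nlinarith [hνmax ⟨0, hk⟩, hν0 ⟨0, hk⟩]
  have hsmin2 : 0 < sigmaMin B ^ 2 + w ^ 2 := by nlinarith [sq_nonneg (sigmaMin B)]
  rw [hdiff, hquad, hsum]
  constructor
  · rw [Finset.mul_sum, Finset.sum_div, Finset.mul_sum]
    apply Finset.sum_le_sum
    intro j _
    rw [show w ^ 2 * ((ν j + w ^ 2)⁻¹ * c j ^ 2) = w ^ 2 * c j ^ 2 / (ν j + w ^ 2) by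
      rw [div_eq_mul_inv]; ring]
    gcongr
    · exact hνpos j
    · linarith [hνmax j]
  · rw [Finset.mul_sum, Finset.mul_sum, Finset.sum_div]
    apply Finset.sum_le_sum
    intro j _
    rw [show w ^ 2 * ((ν j + w ^ 2)⁻¹ * c j ^ 2) = w ^ 2 * c j ^ 2 / (ν j + w ^ 2) by
      rw [div_eq_mul_inv]; ring]
    gcongr
    exact hνmin j
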